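/- arXiv:1004.4798 — 2 statements merged into one kernel-verified Lean document; each statement's English description precedes it below -/
import Mathlib

section
/- If there is an s-poset for a sequence s of infinite cardinals, then there is a locally compact Hausdorff scattered topological space whose cardinal sequence is s. -/
open Cardinal

/-- The underlying set of an `s`-poset for `s = ⟨κ_α : α < δ⟩`. -/
def SCarrier (δ : Ordinal.{0}) (κ : Ordinal.{0} → Cardinal.{0}) : Type 1 :=
  {p : Ordinal × Ordinal // p.1 < δ ∧ p.2 < (κ p.1).ord}

/-- An `s`-poset for the sequence `s = ⟨κ_α : α < δ⟩` (Bagaria). -/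
structure SPoset (δ : Ordinal.{0}) (κ : Ordinal.{0} → Cardinal.{0}) : Type 1 where
  le : SCarrier δ κ → SCarrier δ κ → Prop
  le_refl : ∀ s, le s s
  le_antisymm : ∀ s t, le s t → le t s → s = t
  le_trans : ∀ s t u, le s t → le t u → le s u
  lt_levels : ∀ s t, le s t → s ≠ t → s.1.1 < t.1.1
  inf : ∀ s t : SCarrier δ κ, s ≠ t → ∃ F : Finset (SCarrier δ κ),
    ∀ u, (le u s ∧ le u t) ↔ ∃ v ∈ F, le u v
  pred_infinite : ∀ α β : Ordinal, α < β → β < δ → ∀ t : SCarrier δ κ, t.1.1 = β →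
    {s : SCarrier δ κ | s.1.1 = α ∧ le s t ∧ s ≠ t}.Infinite

/-- A topological space is scattered iff every nonempty subset has a point isolated in it. -/
def Scattered (X : Type 1) (tX : TopologicalSpace X) : Prop :=
  ∀ S : Set X, S.Nonempty → ∃ x ∈ S, ∃ U : Set X, tX.IsOpen U ∧ U ∩ S = {x}

/-- The `α`-th Cantor–Bendixson derivative of a topological space. -/
noncomputable def CBDeriv (X : Type 1) (tX : TopologicalSpace X) (o : Ordinal.{0}) :
    Set X :=
  Ordinal.limitRecOn o (Set.univ : Set X)
    (fun _ S => S \ {x | x ∈ S ∧ ∃ U : Set X, tX.IsOpen U ∧ U ∩ S = {x}})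
    (fun o _ IH => ⋂ (β : Ordinal) (h : β < o), IH β h)

/-- The `α`-th Cantor–Bendixson level `I_α(X) = X^α \ X^{α+1}`. -/
noncomputable def CBLevel (X : Type 1) (tX : TopologicalSpace X) (o : Ordinal.{0}) :
    Set X :=
  CBDeriv X tX o \ CBDeriv X tX (o + 1)

lemma CBDeriv_zero (X : Type 1) (tX : TopologicalSpace X) :
    CBDeriv X tX 0 = Set.univ :=
  Ordinal.limitRecOn_zero _ _ _

lemma CBDeriv_succ (X : Type 1) (tX : TopologicalSpace X) (o : Ordinal.{0}) :
    CBDeriv X tX (o + 1) = CBDeriv X tX o \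
      {x | x ∈ CBDeriv X tX o ∧ ∃ U : Set X, tX.IsOpen U ∧ U ∩ CBDeriv X tX o = {x}} := by
  rw [show (o + 1 : Ordinal) = Order.succ o from Ordinal.add_one_eq_succ o]
  exact Ordinal.limitRecOn_succ _ _ _ _

lemma CBDeriv_limit (X : Type 1) (tX : TopologicalSpace X) {o : Ordinal.{0}}
    (h : Order.IsSuccLimit o) :
    CBDeriv X tX o = ⋂ (β : Ordinal) (_ : β < o), CBDeriv X tX β :=
  Ordinal.limitRecOn_limit _ _ _ _ h

namespace SPoset

open scoped Classical

variable {δ : Ordinal.{0}} {κ : Ordinal.{0} → Cardinal.{0}} (P : SPoset δ κ)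

def cone (t : SCarrier δ κ) : Set (SCarrier δ κ) := {s | P.le s t}

lemma mem_cone_self (t : SCarrier δ κ) : t ∈ P.cone t := P.le_refl t

lemma lev_le_of_le {s t : SCarrier δ κ} (h : P.le s t) : s.1.1 ≤ t.1.1 := by
  rcases eq_or_ne s t with rfl | hne
  · exact le_rfl
  · exact (P.lt_levels s t h hne).le

noncomputable def infW (s u : SCarrier δ κ) : Finset (SCarrier δ κ) :=
  if h : s ≠ u then (P.inf s u h).choose else ∅

lemma infW_spec {s u : SCarrier δ κ} (h : s ≠ u) :
    ∀ w, (P.le w s ∧ P.le w u) ↔ ∃ v ∈ P.infW s u, P.le w v := by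
  rw [infW, dif_pos h]; exact (P.inf s u h).choose_spec

lemma infW_le {s u v : SCarrier δ κ} (h : s ≠ u) (hv : v ∈ P.infW s u) :
    P.le v s ∧ P.le v u :=
  (P.infW_spec h v).2 ⟨v, hv, P.le_refl v⟩

def bset (t : SCarrier δ κ) (F : Finset (SCarrier δ κ)) : Set (SCarrier δ κ) :=
  P.cone t \ ⋃ u ∈ F, P.cone u

lemma mem_bset_iff {t : SCarrier δ κ} {F : Finset (SCarrier δ κ)} {x : SCarrier δ κ} :
    x ∈ P.bset t F ↔ P.le x t ∧ ∀ u ∈ F, ¬ P.le x u := by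
  simp [bset, cone]

lemma bset_empty (t : SCarrier δ κ) : P.bset t ∅ = P.cone t := by
  simp [bset]

lemma shrink {s t : SCarrier δ κ} {F : Finset (SCarrier δ κ)} (hs : s ∈ P.bset t F) :
    ∃ F' : Finset (SCarrier δ κ), s ∈ P.bset s F' ∧ P.bset s F' ⊆ P.bset t F := by
  classical
  obtain ⟨hst, hF⟩ := P.mem_bset_iff.mp hs
  refine ⟨F.biUnion (fun u => P.infW s u), ?_, ?_⟩
  · rw [mem_bset_iff]
    refine ⟨P.le_refl s, ?_⟩
    intro v hv
    simp only [Finset.mem_biUnion] at hv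
    obtain ⟨u, hu, hvu⟩ := hv
    have hne : s ≠ u := fun h => hF u hu (h ▸ P.le_refl s)
    obtain ⟨hvs, hvu'⟩ := P.infW_le hne hvu
    exact fun hsv => hF u hu (P.le_trans s v u hsv hvu')
  · intro w hw
    rw [mem_bset_iff] at hw ⊢
    refine ⟨P.le_trans w s t hw.1 hst, ?_⟩
    intro u hu hwu
    have hne : s ≠ u := fun h => hF u hu (h ▸ P.le_refl s)
    obtain ⟨v, hv, hwv⟩ := (P.infW_spec hne w).1 ⟨hw.1, hwu⟩
    exact hw.2 v (Finset.mem_biUnion.mpr ⟨u, hu, hv⟩) hwv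

def Basis : Set (Set (SCarrier δ κ)) := {B | ∃ t F, B = P.bset t F}

noncomputable def topo : TopologicalSpace (SCarrier δ κ) :=
  TopologicalSpace.generateFrom P.Basis

lemma isBasis : @TopologicalSpace.IsTopologicalBasis _ P.topo P.Basis := by
  letI := P.topo
  refine ⟨?_, ?_, rfl⟩
  · rintro B1 ⟨t1, F1, rfl⟩ B2 ⟨t2, F2, rfl⟩ x hx
    obtain ⟨F1', hx1, hsub1⟩ := P.shrink hx.1
    obtain ⟨F2', hx2, hsub2⟩ := P.shrink hx.2
    refine ⟨P.bset x (F1' ∪ F2'), ⟨x, _, rfl⟩, ?_, ?_⟩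
    · rw [mem_bset_iff]
      refine ⟨P.le_refl x, fun u hu => ?_⟩
      rcases Finset.mem_union.mp hu with h | h
      exacts [(P.mem_bset_iff.mp hx1).2 u h, (P.mem_bset_iff.mp hx2).2 u h]
    · intro w hw
      rw [mem_bset_iff] at hw
      constructor
      · exact hsub1 (P.mem_bset_iff.mpr
          ⟨hw.1, fun u hu => hw.2 u (Finset.mem_union_left _ hu)⟩)
      · exact hsub2 (P.mem_bset_iff.mpr
          ⟨hw.1, fun u hu => hw.2 u (Finset.mem_union_right _ hu)⟩)
  · apply Set.eq_univ_of_forall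
    intro x
    exact ⟨P.bset x ∅, ⟨x, ∅, rfl⟩, by rw [P.bset_empty]; exact P.mem_cone_self x⟩

lemma bset_isOpen (t : SCarrier δ κ) (F : Finset (SCarrier δ κ)) :
    @IsOpen _ P.topo (P.bset t F) := by
  letI := P.topo
  exact P.isBasis.isOpen ⟨t, F, rfl⟩

lemma cone_isOpen (t : SCarrier δ κ) : @IsOpen _ P.topo (P.cone t) := by
  rw [← P.bset_empty]; exact P.bset_isOpen t ∅


lemma cone_isClosed (u : SCarrier δ κ) : @IsClosed _ P.topo (P.cone u) := by
  letI := P.topo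
  rw [← isOpen_compl_iff]
  rw [P.isBasis.isOpen_iff]
  intro x hx
  have hxu : ¬ P.le x u := hx
  have hne : x ≠ u := fun h => hxu (h ▸ P.le_refl x)
  refine ⟨P.bset x (P.infW x u), ⟨x, _, rfl⟩, ?_, ?_⟩
  · rw [P.mem_bset_iff]
    refine ⟨P.le_refl x, fun v hv hxv => ?_⟩
    exact hxu (P.le_trans x v u hxv (P.infW_le hne hv).2)
  · intro w hw hwu
    rw [P.mem_bset_iff] at hw
    obtain ⟨v, hv, hwv⟩ := (P.infW_spec hne w).1 ⟨hw.1, hwu⟩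
    exact hw.2 v hv hwv

lemma cone_isCompact_aux (o : Ordinal) :
    ∀ t : SCarrier δ κ, t.1.1 = o → @IsCompact _ P.topo (P.cone t) := by
  letI := P.topo
  induction o using Ordinal.induction with
  | h o IH =>
  intro t ho
  rw [isCompact_iff_finite_subcover]
  intro ι U hUopen hcov
  obtain ⟨i0, hi0⟩ := Set.mem_iUnion.mp (hcov (P.mem_cone_self t))
  obtain ⟨B, ⟨t', F0, rfl⟩, htB, hBU⟩ := P.isBasis.exists_subset_of_mem_open hi0 (hUopen i0)
  obtain ⟨F, htF, hsub⟩ := P.shrink htB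
  have htF' := P.mem_bset_iff.mp htF
  set V := F.biUnion (fun u => P.infW t u) with hV
  have hVprop : ∀ v ∈ V, P.le v t ∧ v.1.1 < t.1.1 := by
    intro v hv
    obtain ⟨u, hu, hvu⟩ := Finset.mem_biUnion.mp hv
    have hne : t ≠ u := fun h => htF'.2 u hu (h ▸ P.le_refl t)
    obtain ⟨hvt, hvu'⟩ := P.infW_le hne hvu
    have hvnet : v ≠ t := fun h => htF'.2 u hu (h ▸ hvu')
    exact ⟨hvt, P.lt_levels v t hvt hvnet⟩
  have hK : @IsCompact _ P.topo (⋃ v ∈ V, P.cone v) := by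
    refine V.isCompact_biUnion fun v hv => ?_
    exact IH v.1.1 (ho ▸ (hVprop v hv).2) v rfl
  have hKcov : (⋃ v ∈ V, P.cone v) ⊆ ⋃ i, U i := by
    refine Set.iUnion₂_subset fun v hv => ?_
    intro w hw
    exact hcov (P.le_trans w v t hw (hVprop v hv).1)
  obtain ⟨J, hJ⟩ := isCompact_iff_finite_subcover.mp hK U hUopen hKcov
  refine ⟨insert i0 J, fun w hw => ?_⟩
  by_cases hwB : w ∈ P.bset t F
  · exact Set.mem_biUnion (Finset.mem_insert_self i0 J) (hBU (hsub hwB))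
  · have hwt : P.le w t := hw
    rw [P.mem_bset_iff] at hwB
    push_neg at hwB
    obtain ⟨u, hu, hwu⟩ := hwB hwt
    have hne : t ≠ u := fun h => htF'.2 u hu (h ▸ P.le_refl t)
    obtain ⟨v, hv, hwv⟩ := (P.infW_spec hne w).1 ⟨hwt, hwu⟩
    have : w ∈ ⋃ v ∈ V, P.cone v :=
      Set.mem_biUnion (Finset.mem_biUnion.mpr ⟨u, hu, hv⟩) hwv
    obtain ⟨j, hjJ, hwj⟩ := Set.mem_iUnion₂.mp (hJ this)
    exact Set.mem_biUnion (Finset.mem_insert_of_mem hjJ) hwj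

lemma cone_isCompact (t : SCarrier δ κ) : @IsCompact _ P.topo (P.cone t) :=
  P.cone_isCompact_aux t.1.1 t rfl

lemma bset_isCompact (t : SCarrier δ κ) (F : Finset (SCarrier δ κ)) :
    @IsCompact _ P.topo (P.bset t F) := by
  letI := P.topo
  have hcl : IsClosed (⋃ u ∈ F, P.cone u)ᶜ := by
    rw [isClosed_compl_iff]
    exact isOpen_biUnion fun u _ => P.cone_isOpen u
  have : P.bset t F = P.cone t ∩ (⋃ u ∈ F, P.cone u)ᶜ := Set.diff_eq _ _
  rw [this]
  exact (P.cone_isCompact t).inter_right hcl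

lemma locallyCompact : @LocallyCompactSpace _ P.topo := by
  letI := P.topo
  refine ⟨fun x n hn => ?_⟩
  obtain ⟨u, hun, huo, hxu⟩ := mem_nhds_iff.mp hn
  obtain ⟨B, ⟨t', F0, rfl⟩, hxB, hBu⟩ := P.isBasis.exists_subset_of_mem_open hxu huo
  obtain ⟨F, hxF, hsub⟩ := P.shrink hxB
  exact ⟨P.bset x F, (P.bset_isOpen x F).mem_nhds hxF, (hsub.trans hBu).trans hun,
    P.bset_isCompact x F⟩

lemma t2 : @T2Space _ P.topo := by
  letI := P.topo
  refine ⟨fun x y hxy => ?_⟩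
  rcases Classical.em (P.le x y) with hxy' | hxy'
  · have hyx : ¬ P.le y x := fun h => hxy (P.le_antisymm x y hxy' h)
    refine ⟨P.cone x, P.bset y {x}, P.cone_isOpen x, P.bset_isOpen y {x},
      P.mem_cone_self x, P.mem_bset_iff.mpr ⟨P.le_refl y, by simpa using hyx⟩, ?_⟩
    rw [Set.disjoint_left]
    intro w hw hw'
    exact (P.mem_bset_iff.mp hw').2 x (Finset.mem_singleton_self x) hw
  · rcases Classical.em (P.le y x) with hyx | hyx
    · refine ⟨P.bset x {y}, P.cone y, P.bset_isOpen x {y}, P.cone_isOpen y,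
        P.mem_bset_iff.mpr ⟨P.le_refl x, by simpa using hxy'⟩, P.mem_cone_self y, ?_⟩
      rw [Set.disjoint_left]
      intro w hw hw'
      exact (P.mem_bset_iff.mp hw).2 y (Finset.mem_singleton_self y) hw'
    · refine ⟨P.bset x (P.infW x y), P.bset y (P.infW x y),
        P.bset_isOpen _ _, P.bset_isOpen _ _, ?_, ?_, ?_⟩
      · refine P.mem_bset_iff.mpr ⟨P.le_refl x, fun v hv hxv => ?_⟩
        exact hxy' (P.le_trans x v y hxv (P.infW_le hxy hv).2)
      · refine P.mem_bset_iff.mpr ⟨P.le_refl y, fun v hv hyv => ?_⟩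
        exact hyx (P.le_trans y v x hyv (P.infW_le hxy hv).1)
      · rw [Set.disjoint_left]
        intro w hw hw'
        obtain ⟨v, hv, hwv⟩ := (P.infW_spec hxy w).1
          ⟨(P.mem_bset_iff.mp hw).1, (P.mem_bset_iff.mp hw').1⟩
        exact (P.mem_bset_iff.mp hw).2 v hv hwv


def Lset (_P : SPoset δ κ) (o : Ordinal) : Set (SCarrier δ κ) := {t | o ≤ t.1.1}

lemma cone_inter_Lset {o : Ordinal} {t : SCarrier δ κ} (ht : t.1.1 = o) :
    P.cone t ∩ P.Lset o = {t} := by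
  ext s
  simp only [Set.mem_inter_iff, Set.mem_singleton_iff]
  constructor
  · rintro ⟨hst, hso⟩
    by_contra hne
    have h1 : s.1.1 < t.1.1 := P.lt_levels s t hst hne
    have h2 : o ≤ s.1.1 := hso
    rw [ht] at h1
    exact absurd h1 (not_lt.mpr h2)
  · rintro rfl
    exact ⟨P.mem_cone_self s, ht.ge⟩

lemma dense_below {o : Ordinal} {t : SCarrier δ κ} (ht : o < t.1.1)
    {U : Set (SCarrier δ κ)} (hU : @IsOpen _ P.topo U) (htU : t ∈ U) :
    ∃ s, s ∈ U ∧ o ≤ s.1.1 ∧ s ≠ t := by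
  classical
  letI := P.topo
  obtain ⟨B, ⟨t', F0, rfl⟩, htB, hBU⟩ := P.isBasis.exists_subset_of_mem_open htU hU
  obtain ⟨F, htF, hsub⟩ := P.shrink htB
  have htF' := P.mem_bset_iff.mp htF
  set V := F.biUnion (fun u => P.infW t u) with hV
  have hVprop : ∀ v ∈ V, P.le v t ∧ v.1.1 < t.1.1 := by
    intro v hv
    obtain ⟨u, hu, hvu⟩ := Finset.mem_biUnion.mp hv
    have hne : t ≠ u := fun h => htF'.2 u hu (h ▸ P.le_refl t)
    obtain ⟨hvt, hvu'⟩ := P.infW_le hne hvu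
    have hvnet : v ≠ t := fun h => htF'.2 u hu (h ▸ hvu')
    exact ⟨hvt, P.lt_levels v t hvt hvnet⟩
  set L : Finset Ordinal := insert o (V.image (fun v => v.1.1)) with hL
  have hLne : L.Nonempty := ⟨o, Finset.mem_insert_self _ _⟩
  have hγo : o ≤ L.max' hLne := L.le_max' o (Finset.mem_insert_self _ _)
  have hγβ : L.max' hLne < t.1.1 := by
    rcases Finset.mem_insert.mp (L.max'_mem hLne) with h | h
    · exact h ▸ ht
    · obtain ⟨v, hv, hveq⟩ := Finset.mem_image.mp h
      exact hveq ▸ (hVprop v hv).2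
  have hinf := P.pred_infinite (L.max' hLne) t.1.1 hγβ t.2.1 t rfl
  have hfin : ({s : SCarrier δ κ | s.1.1 = L.max' hLne ∧ P.le s t ∧ s ≠ t} ∩
      ⋃ v ∈ V, P.cone v).Finite := by
    apply Set.Finite.subset V.finite_toSet
    rintro s ⟨⟨hsγ, -, -⟩, hsV⟩
    obtain ⟨v, hv, hsv⟩ := Set.mem_iUnion₂.mp hsV
    have hvγ : v.1.1 ≤ L.max' hLne :=
      L.le_max' _ (Finset.mem_insert_of_mem (Finset.mem_image_of_mem _ hv))
    have hsveq : s = v := by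
      by_contra hne
      exact absurd (P.lt_levels s v hsv hne) (not_lt.mpr (hvγ.trans hsγ.ge))
    rw [hsveq]
    exact hv
  obtain ⟨s, hsmem, hsV⟩ := (hinf.diff hfin).nonempty
  obtain ⟨hsγ, hst, hsnet⟩ := hsmem
  refine ⟨s, ?_, hγo.trans hsγ.ge, hsnet⟩
  refine hBU (hsub (P.mem_bset_iff.mpr ⟨hst, fun u hu hsu => ?_⟩))
  have hne : t ≠ u := fun h => htF'.2 u hu (h ▸ P.le_refl t)
  obtain ⟨v, hv, hsv⟩ := (P.infW_spec hne s).1 ⟨hst, hsu⟩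
  exact hsV ⟨⟨hsγ, hst, hsnet⟩,
    Set.mem_biUnion (Finset.mem_biUnion.mpr ⟨u, hu, hv⟩) hsv⟩

lemma cbderiv_eq (o : Ordinal) : CBDeriv (SCarrier δ κ) P.topo o = P.Lset o := by
  induction o using Ordinal.induction with
  | h o IH =>
  rcases Ordinal.zero_or_succ_or_isSuccLimit o with rfl | ⟨a, rfl⟩ | hlim
  · rw [CBDeriv_zero]
    ext x
    simp [Lset, zero_le]
  · rw [← Ordinal.add_one_eq_succ, CBDeriv_succ, IH a (Order.lt_succ a)]
    ext x
    simp only [Lset, Set.mem_diff, Set.mem_setOf_eq, Ordinal.add_one_eq_succ,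
      Order.succ_le_iff]
    constructor
    · rintro ⟨ha, hniso⟩
      rcases ha.lt_or_eq with h | h
      · exact h
      · exact absurd ⟨h.symm.ge, P.cone x, P.cone_isOpen x, P.cone_inter_Lset h.symm⟩ hniso
    · intro h
      refine ⟨h.le, ?_⟩
      rintro ⟨-, U, hUo, hUx⟩
      have hxU : x ∈ U := by
        have hx : x ∈ U ∩ {t : SCarrier δ κ | a ≤ t.1.1} := by
          rw [hUx]; exact rfl
        exact hx.1
      obtain ⟨s, hsU, hsa, hsne⟩ := P.dense_below h hUo hxU
      have hs : s ∈ U ∩ {t : SCarrier δ κ | a ≤ t.1.1} := ⟨hsU, hsa⟩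
      rw [hUx] at hs
      exact hsne hs
  · rw [CBDeriv_limit _ _ hlim]
    ext x
    simp only [Set.mem_iInter]
    constructor
    · intro hx
      by_contra hlt
      rw [Lset, Set.mem_setOf_eq, not_le] at hlt
      have h1 := hx (Order.succ x.1.1) (hlim.succ_lt hlt)
      rw [IH _ (hlim.succ_lt hlt)] at h1
      have h2 : Order.succ x.1.1 ≤ x.1.1 := h1
      exact absurd (Order.succ_le_iff.mp h2) (lt_irrefl _)
    · intro ho β hβ
      rw [IH β hβ]
      exact hβ.le.trans ho

lemma cblevel_eq (α : Ordinal) :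
    CBLevel (SCarrier δ κ) P.topo α = {t : SCarrier δ κ | t.1.1 = α} := by
  rw [CBLevel, P.cbderiv_eq, P.cbderiv_eq]
  ext x
  simp only [Lset, Set.mem_diff, Set.mem_setOf_eq, Ordinal.add_one_eq_succ,
    Order.succ_le_iff, not_lt]
  exact ⟨fun h => h.2.antisymm h.1, fun h => ⟨h.ge, h.le⟩⟩

lemma card_level (_P : SPoset δ κ) {α : Ordinal} (hα : α < δ) :
    #({t : SCarrier δ κ | t.1.1 = α}) = Cardinal.lift.{1} (κ α) := by
  have e : (↥{t : SCarrier δ κ | t.1.1 = α}) ≃ ↥(Set.Iio ((κ α).ord)) :=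
    { toFun := fun t => ⟨t.1.1.2, by
        have h := t.1.2.2
        rwa [show t.1.1.1 = α from t.2] at h⟩
      invFun := fun b => ⟨⟨⟨α, b.1⟩, ⟨hα, b.2⟩⟩, rfl⟩
      left_inv := fun t => by
        apply Subtype.ext
        apply Subtype.ext
        exact Prod.ext (show α = t.1.1.1 from t.2.symm) rfl
      right_inv := fun b => rfl }
  rw [Cardinal.mk_congr e, Ordinal.mk_Iio_ordinal, Cardinal.card_ord]

lemma scattered : Scattered (SCarrier δ κ) P.topo := by
  intro S hS
  obtain ⟨x0, hx0⟩ := hS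
  obtain ⟨o, ⟨x, hxS, hxo⟩, hmin⟩ :=
    Ordinal.lt_wf.has_min {o : Ordinal | ∃ x ∈ S, x.1.1 = o} ⟨x0.1.1, x0, hx0, rfl⟩
  refine ⟨x, hxS, P.cone x, P.cone_isOpen x, ?_⟩
  ext s
  simp only [Set.mem_inter_iff, Set.mem_singleton_iff]
  constructor
  · rintro ⟨hsx, hsS⟩
    by_contra hne
    exact hmin s.1.1 ⟨s, hsS, rfl⟩ (hxo ▸ P.lt_levels s x hsx hne)
  · rintro rfl
    exact ⟨P.mem_cone_self s, hxS⟩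

end SPoset

/-- If there is an `s`-poset for a sequence `s = ⟨κ_α : α < δ⟩` of infinite cardinals,
then there is a locally compact Hausdorff scattered space whose cardinal sequence is `s`,
i.e. whose reduced height is `δ` and whose `α`-th Cantor–Bendixson level has size `κ_α`
for every `α < δ`. -/
theorem exists_scattered_space_of_sposet (δ : Ordinal.{0})
    (κ : Ordinal.{0} → Cardinal.{0}) (hκ : ∀ α < δ, ℵ₀ ≤ κ α)
    (h : Nonempty (SPoset δ κ)) :
    ∃ (X : Type 1) (tX : TopologicalSpace X),
      @LocallyCompactSpace X tX ∧ @T2Space X tX ∧ Scattered X tX ∧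
      (CBDeriv X tX δ).Finite ∧ (∀ β < δ, ¬ (CBDeriv X tX β).Finite) ∧
      ∀ α < δ, #(CBLevel X tX α) = Cardinal.lift.{1} (κ α) := by
  obtain ⟨P⟩ := h
  refine ⟨SCarrier δ κ, P.topo, P.locallyCompact, P.t2, P.scattered, ?_, ?_, ?_⟩
  · rw [P.cbderiv_eq]
    have hempty : P.Lset δ = ∅ := by
      ext t
      simp only [SPoset.Lset, Set.mem_setOf_eq, Set.mem_empty_iff_false, iff_false,
        not_le]
      exact t.2.1
    rw [hempty]
    exact Set.finite_empty
  · intro β hβ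
    rw [P.cbderiv_eq]
    have hsub : {t : SCarrier δ κ | t.1.1 = β} ⊆ P.Lset β := fun t ht => ht.ge
    have hinf : {t : SCarrier δ κ | t.1.1 = β}.Infinite := by
      rw [← Set.infinite_coe_iff, Cardinal.infinite_iff, P.card_level hβ]
      exact Cardinal.aleph0_le_lift.mpr (hκ β hβ)
    exact hinf.mono hsub
  · intro α hα
    rw [P.cblevel_eq, P.card_level hα]
end

section
/- (Kernel lemma) Let P be the forcing with conditions ⟨X,⪯,i⟩ of size < κ on T = (⋃_{α<η}{α}×κ) ∪ ({η}×λ) satisfying (P1)–(P5) as in the main construction. Suppose Z ⊆ P is a separated set of size κ⁺ with root X (of the Δ-system {X_p : p ∈ Z}), p ∈ Z, and s,t ∈ X_p are compatible but not comparable in p with s ∈ X ∩ T_{<η}. Then i_p{s,t} ∈ X. -/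
open scoped Classical
open Cardinal

/-- The tree of intervals `𝕀_η = ⋃_n 𝒥_n` on `[0,η)`:  `𝒥_0 = {[0,η)}`; an interval
`I = [a,b)` with `b` limit is partitioned into the consecutive intervals
`[ε^I_ν, ε^I_{ν+1})`, `ν < cf(b)`, determined by a fixed closed cofinal subset
`E(I) = {ε^I_ν : ν < cf(b)}` of `I` of order type `cf(b)` with `ε^I_0 = a`
(here `ε^I = eps I` is its increasing continuous enumeration);  an interval
`I = [a, b'+1)` is partitioned into `[a,b')` and `{b'} = [b', b'+1)`.
An interval `[a,b)` is coded by the pair `(a,b)`. -/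
structure IntervalTree (η : Ordinal.{0}) : Type 1 where
  J : ℕ → Set (Ordinal × Ordinal)
  eps : Ordinal × Ordinal → Ordinal → Ordinal
  zero_eq : J 0 = {((0 : Ordinal), η)}
  lt_of_mem : ∀ n p, p ∈ J n → p.1 < p.2 ∧ p.2 ≤ η
  eps_zero : ∀ n p, p ∈ J n → Order.IsSuccLimit p.2 → eps p 0 = p.1
  eps_strictMono : ∀ n p, p ∈ J n → Order.IsSuccLimit p.2 →
    ∀ ν ξ : Ordinal, ν < ξ → ξ < (Ordinal.cof p.2).ord → eps p ν < eps p ξ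
  eps_lt : ∀ n p, p ∈ J n → Order.IsSuccLimit p.2 →
    ∀ ν < (Ordinal.cof p.2).ord, eps p ν < p.2
  eps_cofinal : ∀ n p, p ∈ J n → Order.IsSuccLimit p.2 →
    ∀ β < p.2, ∃ ν < (Ordinal.cof p.2).ord, β ≤ eps p ν
  eps_cont : ∀ n p, p ∈ J n → Order.IsSuccLimit p.2 →
    ∀ ν, ν < (Ordinal.cof p.2).ord → Order.IsSuccLimit ν →
      eps p ν = sSup (eps p '' Set.Iio ν)
  succ_eq : ∀ n, J (n + 1) = {q | ∃ p ∈ J n,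
    (Order.IsSuccLimit p.2 ∧ ∃ ν < (Ordinal.cof p.2).ord, q = (eps p ν, eps p (ν + 1))) ∨
    (∃ β' : Ordinal, p.2 = β' + 1 ∧ (q = (β', p.2) ∨ (p.1 < β' ∧ q = (p.1, β'))))}

/-- Membership in the tree of intervals `𝕀_η`. -/
def IntervalTree.memT {η : Ordinal.{0}} (T : IntervalTree η) (p : Ordinal × Ordinal) :
    Prop :=
  ∃ n, p ∈ T.J n

/-- `E(I)`: the distinguished closed cofinal subset of the interval `I`. -/
noncomputable def IntervalTree.Eset {η : Ordinal.{0}} (T : IntervalTree η)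
    (p : Ordinal × Ordinal) : Set Ordinal :=
  if Order.IsSuccLimit p.2 then T.eps p '' Set.Iio (Ordinal.cof p.2).ord
  else {x | x = p.1 ∨ x + 1 = p.2}

/-- `I(α,n)`: the (unique) interval of `𝒥_n` containing `α` (junk value if none). -/
noncomputable def IntervalTree.Iat {η : Ordinal.{0}} (T : IntervalTree η)
    (α : Ordinal.{0}) (n : ℕ) : Ordinal × Ordinal :=
  if h : ∃ p, p ∈ T.J n ∧ α ∈ Set.Ico p.1 p.2 then h.choose else (0, 0)

/-- `n(α)`: the least `n` such that some interval of `𝒥_n` has left endpoint `α`. -/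
noncomputable def IntervalTree.nAt {η : Ordinal.{0}} (T : IntervalTree η)
    (α : Ordinal.{0}) : ℕ :=
  sInf {n | (T.Iat α n).1 = α}

/-- The orbit `o(α) = ⋃_{m < n(α)} (E(I(α,m)) ∩ α)`. -/
noncomputable def IntervalTree.orbit {η : Ordinal.{0}} (T : IntervalTree η)
    (α : Ordinal.{0}) : Set Ordinal :=
  ⋃ m ∈ Set.Iio (T.nAt α), T.Eset (T.Iat α m) ∩ Set.Iio α

/-- `j(α,β) = max{j : I(α,j) = I(β,j)}`. -/
noncomputable def IntervalTree.jj {η : Ordinal.{0}} (T : IntervalTree η)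
    (α β : Ordinal.{0}) : ℕ :=
  sSup {j | T.Iat α j = T.Iat β j}

/-- `J(α,β) = I(α, j(α,β)+1)` for `β < η`, and `J(α,η) = I(α,1)`. -/
noncomputable def IntervalTree.Jab {η : Ordinal.{0}} (T : IntervalTree η)
    (α β : Ordinal.{0}) : Ordinal × Ordinal :=
  if β = η then T.Iat α 1 else T.Iat α (T.jj α β + 1)

/-- The underlying set `T = (⋃_{α<η} {α}×κ) ∪ ({η}×λ)` of the main construction. -/
def TT2 (κ lam : Cardinal.{0}) (η : Ordinal.{0}) : Set (Ordinal × Ordinal) :=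
  {p | (p.1 < η ∧ p.2 < κ.ord) ∨ (p.1 = η ∧ p.2 < lam.ord)}

/-- A condition `p = ⟨X, ⪯, i⟩` of the main forcing: `X ∈ [T]^{<κ}` (P1), `⪯` is a
partial order on `X` increasing on levels (P2), `i` is a (single-valued) infimum
function (P3), infima of compatible but incomparable pairs have levels in the
appropriate orbits / `E` / below the `F`-value (P4)(a)–(d), and isolating intervals
`Λ = J(π(s),π(t))` yield interpolants at level `Λ⁺` (P5). -/
structure Cond2 (κ lam : Cardinal.{0}) (η : Ordinal.{0}) (T : IntervalTree η)
    (F : Ordinal.{0} → Ordinal.{0} → Ordinal.{0}) : Type 2 where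
  X : Set (Ordinal × Ordinal)
  small : #X < Cardinal.lift.{1} κ
  subT : X ⊆ TT2 κ lam η
  le : (Ordinal × Ordinal) → (Ordinal × Ordinal) → Prop
  le_refl : ∀ s ∈ X, le s s
  le_antisymm : ∀ s ∈ X, ∀ t ∈ X, le s t → le t s → s = t
  le_trans : ∀ s ∈ X, ∀ t ∈ X, ∀ u ∈ X, le s t → le t u → le s u
  lt_levels : ∀ s ∈ X, ∀ t ∈ X, le s t → s ≠ t → s.1 < t.1
  i : (Ordinal × Ordinal) → (Ordinal × Ordinal) → Option (Ordinal × Ordinal)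
  i_symm : ∀ s t, i s t = i t s
  i_mem : ∀ s ∈ X, ∀ t ∈ X, s ≠ t → ∀ v, i s t = some v → v ∈ X
  i_spec : ∀ s ∈ X, ∀ t ∈ X, s ≠ t →
    ∀ u ∈ X, (le u s ∧ le u t) ↔ ∃ v, i s t = some v ∧ le u v
  P4a : ∀ s ∈ X, ∀ t ∈ X, (∃ u ∈ X, le u s ∧ le u t) → ¬ le s t → ¬ le t s →
    ∀ v, i s t = some v → s.1 < η → t.1 < η → v.1 ∈ T.orbit s.1 ∩ T.orbit t.1
  P4b : ∀ s ∈ X, ∀ t ∈ X, (∃ u ∈ X, le u s ∧ le u t) → ¬ le s t → ¬ le t s →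
    ∀ v, i s t = some v → s.1 < η → t.1 = η →
      v.1 ∈ T.orbit s.1 ∩ T.Eset (0, η)
  P4c : ∀ s ∈ X, ∀ t ∈ X, (∃ u ∈ X, le u s ∧ le u t) → ¬ le s t → ¬ le t s →
    ∀ v, i s t = some v → s.1 = η → t.1 < η →
      v.1 ∈ T.orbit t.1 ∩ T.Eset (0, η)
  P4d : ∀ s ∈ X, ∀ t ∈ X, (∃ u ∈ X, le u s ∧ le u t) → ¬ le s t → ¬ le t s →
    ∀ v, i s t = some v → s.1 = η → t.1 = η →
      v.1 < F s.2 t.2 ∧ v.1 ∈ T.Eset (0, η)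
  P5 : ∀ s ∈ X, ∀ t ∈ X, le s t → s ≠ t →
    (T.Jab s.1 t.1).1 < s.1 → s.1 < (T.Jab s.1 t.1).2 → (T.Jab s.1 t.1).2 ≤ t.1 →
    ∃ u ∈ X, le s u ∧ le u t ∧ u.1 = (T.Jab s.1 t.1).2

/-- An adequate bijection between two pieces `A, B` of the underlying set. -/
def Adequate (η : Ordinal.{0}) (A B : Set (Ordinal × Ordinal))
    (g : (Ordinal × Ordinal) → (Ordinal × Ordinal)) : Prop :=
  Set.BijOn g A B ∧
  (∀ s ∈ A, (s.1 < η ↔ (g s).1 < η)) ∧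
  (∀ s ∈ A, ∀ t ∈ A, (s.1 < t.1 ↔ (g s).1 < (g t).1)) ∧
  (∀ s ∈ A, s.1 < η → (g s).2 = s.2) ∧
  (∀ s ∈ A, ∀ t ∈ A, s.1 = η → t.1 = η → (s.2 < t.2 ↔ (g s).2 < (g t).2))

/-- `Z` is separated, with root `X0` and adequate bijections `h p q : X_p → X_q`. -/
def Separated {κ lam : Cardinal.{0}} {η : Ordinal.{0}} {T : IntervalTree η}
    {F : Ordinal.{0} → Ordinal.{0} → Ordinal.{0}}
    (Z : Set (Cond2 κ lam η T F)) (X0 : Set (Ordinal × Ordinal))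
    (h : Cond2 κ lam η T F → Cond2 κ lam η T F →
      (Ordinal × Ordinal) → (Ordinal × Ordinal)) : Prop :=
  (∀ p ∈ Z, ∀ q ∈ Z, p ≠ q → p.X ∩ q.X = X0) ∧
  (∀ α < η, (∀ p ∈ Z, p.X ∩ {s | s.1 = α} = X0 ∩ {s | s.1 = α}) ∨
    (∀ p ∈ Z, ∀ q ∈ Z, (p.X ∩ {s | s.1 = α}).Nonempty →
      (q.X ∩ {s | s.1 = α}).Nonempty → p = q)) ∧
  (∀ p ∈ Z, ∀ q ∈ Z,
    Adequate η p.X q.X (h p q) ∧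
    (∀ s ∈ X0, h p q s = s) ∧
    (∀ s ∈ p.X, ∀ t ∈ p.X, (p.le s t ↔ q.le (h p q s) (h p q t))) ∧
    (∀ s ∈ p.X, ∀ t ∈ p.X, s ≠ t →
      Option.map (h p q) (p.i s t) = q.i (h p q s) (h p q t)))

/-- Each piece `E(I(α,m)) ∩ α` of an orbit has cardinality at most `κ`. -/
lemma piece_card_le {κ : Cardinal.{0}} (hκ : ℵ₀ ≤ κ) {η : Ordinal.{0}}
    (hη : η.card ≤ Order.succ κ) (T : IntervalTree η) (α : Ordinal.{0}) (m : ℕ) :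
    #(↥(T.Eset (T.Iat α m) ∩ Set.Iio α)) ≤ Cardinal.lift.{1} κ := by
  have hκ' : (ℵ₀ : Cardinal.{1}) ≤ Cardinal.lift.{1} κ := by
    rw [← Cardinal.lift_aleph0.{1,0}]
    exact Cardinal.lift_le.mpr hκ
  have hone : (1 : Cardinal.{1}) ≤ Cardinal.lift.{1} κ :=
    le_trans Cardinal.one_le_aleph0 hκ'
  rw [IntervalTree.Iat]
  split_ifs with hI
  · obtain ⟨hJ, hIco⟩ := hI.choose_spec
    set I := hI.choose with hIdef
    rw [IntervalTree.Eset]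
    split_ifs with hlim
    · -- limit case: bounded initial segment of `E(I)`
      obtain ⟨ν, hν, hαν⟩ := T.eps_cofinal m I hJ hlim α hIco.2
      have hsub : T.eps I '' Set.Iio (Ordinal.cof I.2).ord ∩ Set.Iio α ⊆
          T.eps I '' Set.Iio ν := by
        rintro x ⟨⟨ξ, hξ, rfl⟩, hx⟩
        refine ⟨ξ, ?_, rfl⟩
        by_contra hc
        simp only [Set.mem_Iio, not_lt] at hc
        rcases hc.lt_or_eq with hlt | heq
        · exact absurd (lt_trans (lt_of_lt_of_le hx hαν)
            (T.eps_strictMono m I hJ hlim ν ξ hlt hξ)) (lt_irrefl _)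
        · rw [heq] at hαν
          exact absurd (lt_of_lt_of_le hx hαν) (lt_irrefl _)
      have hνκ : ν.card ≤ κ := by
        have h1 : Ordinal.cof I.2 ≤ Order.succ κ :=
          le_trans (Ordinal.cof_le_card I.2)
            (le_trans (Ordinal.card_le_card ((T.lt_of_mem m I hJ).2)) hη)
        have h2 : ν < (Order.succ κ).ord :=
          lt_of_lt_of_le hν (Cardinal.ord_le_ord.mpr h1)
        exact Order.lt_succ_iff.mp (Cardinal.lt_ord.mp h2)
      calc #(↥(T.eps I '' Set.Iio (Ordinal.cof I.2).ord ∩ Set.Iio α))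
          ≤ #(↥(T.eps I '' Set.Iio ν)) := Cardinal.mk_le_mk_of_subset hsub
        _ ≤ #(↥(Set.Iio ν)) := Cardinal.mk_image_le
        _ = Cardinal.lift.{1} ν.card := Ordinal.mk_Iio_ordinal ν
        _ ≤ Cardinal.lift.{1} κ := Cardinal.lift_le.mpr hνκ
    · -- successor case: `E(I)` has at most two elements
      have hsub : {x | x = I.1 ∨ x + 1 = I.2} ∩ Set.Iio α ⊆
          {I.1} ∪ {x | x + 1 = I.2} := by
        rintro x ⟨hx, -⟩
        rcases hx with hx | hx
        · exact Or.inl hx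
        · exact Or.inr hx
      have hss : ({x : Ordinal | x + 1 = I.2}).Subsingleton := by
        intro x hx y hy
        have : x + 1 = y + 1 := by rw [hx, hy]
        rw [Ordinal.add_one_eq_succ, Ordinal.add_one_eq_succ] at this
        exact Order.succ_injective this
      calc #(↥({x | x = I.1 ∨ x + 1 = I.2} ∩ Set.Iio α))
          ≤ #(↥(({I.1} : Set Ordinal) ∪ {x | x + 1 = I.2})) :=
            Cardinal.mk_le_mk_of_subset hsub
        _ ≤ #(↥({I.1} : Set Ordinal)) + #(↥{x : Ordinal | x + 1 = I.2}) :=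
            Cardinal.mk_union_le _ _
        _ ≤ 1 + 1 := by
            gcongr
            · exact le_of_eq (Cardinal.mk_singleton _)
            · exact Cardinal.mk_le_one_iff_set_subsingleton.mpr hss
        _ ≤ ℵ₀ := by
            have : ((2 : ℕ) : Cardinal.{1}) ≤ ℵ₀ := (Cardinal.nat_lt_aleph0 2).le
            simpa [one_add_one_eq_two] using this
        _ ≤ Cardinal.lift.{1} κ := hκ'
  · -- no interval found: junk value `(0,0)` whose `E`-set is `{0}`
    have hnl : ¬ Order.IsSuccLimit (((0 : Ordinal.{0}), (0 : Ordinal.{0})) : Ordinal.{0} × Ordinal.{0}).2 :=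
      fun hc => hc.1 (fun b _ => by simp)
    rw [IntervalTree.Eset, if_neg hnl]
    have hsub : {x : Ordinal.{0} | x = (((0 : Ordinal.{0}), (0 : Ordinal.{0}))).1 ∨
        x + 1 = (((0 : Ordinal.{0}), (0 : Ordinal.{0}))).2} ∩ Set.Iio α ⊆ {0} := by
      rintro x ⟨hx, -⟩
      rcases hx with hx | hx
      · simpa using hx
      · exact absurd hx (by rw [Ordinal.add_one_eq_succ]; exact Ordinal.succ_ne_zero x)
    calc #(↥({x : Ordinal.{0} | x = (((0 : Ordinal.{0}), (0 : Ordinal.{0}))).1 ∨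
          x + 1 = (((0 : Ordinal.{0}), (0 : Ordinal.{0}))).2} ∩ Set.Iio α))
        ≤ #(↥({0} : Set Ordinal.{0})) := Cardinal.mk_le_mk_of_subset hsub
      _ ≤ 1 := le_of_eq (Cardinal.mk_singleton _)
      _ ≤ Cardinal.lift.{1} κ := hone

/-- Orbits have cardinality at most `κ`. -/
lemma orbit_card_le {κ : Cardinal.{0}} (hκ : ℵ₀ ≤ κ) {η : Ordinal.{0}}
    (hη : η.card ≤ Order.succ κ) (T : IntervalTree η) (α : Ordinal.{0}) :
    #(↥(T.orbit α)) ≤ Cardinal.lift.{1} κ := by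
  have hκ' : (ℵ₀ : Cardinal.{1}) ≤ Cardinal.lift.{1} κ := by
    rw [← Cardinal.lift_aleph0.{1,0}]
    exact Cardinal.lift_le.mpr hκ
  have hsub : T.orbit α ⊆
      ⋃ (m : ULift.{1} ℕ), (T.Eset (T.Iat α m.down) ∩ Set.Iio α) := by
    intro x hx
    simp only [IntervalTree.orbit, Set.mem_iUnion, Set.mem_iUnion₂] at hx ⊢
    obtain ⟨m, _, hm⟩ := hx
    exact ⟨⟨m⟩, hm⟩
  refine le_trans (Cardinal.mk_le_mk_of_subset hsub) ?_
  refine le_trans (Cardinal.mk_iUnion_le _) ?_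
  have h1 : #(ULift.{1} ℕ) ≤ Cardinal.lift.{1} κ := by
    rw [Cardinal.mk_uLift, Cardinal.mk_nat]
    exact le_trans (le_of_eq Cardinal.lift_aleph0) hκ'
  have h2 : (⨆ m : ULift.{1} ℕ, #(↥(T.Eset (T.Iat α m.down) ∩ Set.Iio α))) ≤
      Cardinal.lift.{1} κ :=
    ciSup_le' fun m => piece_card_le hκ hη T α m.down
  calc #(ULift.{1} ℕ) * (⨆ m : ULift.{1} ℕ, #(↥(T.Eset (T.Iat α m.down) ∩ Set.Iio α)))
      ≤ Cardinal.lift.{1} κ * Cardinal.lift.{1} κ := mul_le_mul' h1 h2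
    _ = Cardinal.lift.{1} κ := Cardinal.mul_eq_self hκ'

/-- Kernel lemma: if `Z` is a separated set of size `κ⁺` with root `X0`, `p ∈ Z`, and
`s, t ∈ X_p` are compatible but not comparable in `p` with `s ∈ X0 ∩ T_{<η}`, then
`i_p{s,t} ∈ X0`. -/
theorem kernel_lemma (κ lam : Cardinal.{0}) (hκ : ℵ₀ ≤ κ)
    (η : Ordinal.{0}) (hη₁ : (Order.succ κ).ord ≤ η)
    (hη₂ : η < (Order.succ (Order.succ κ)).ord)
    (hcof : Ordinal.cof η = Order.succ κ)
    (hlam : (Order.succ (Order.succ (Order.succ κ))).ord ≤ lam.ord)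
    (T : IntervalTree η) (F : Ordinal.{0} → Ordinal.{0} → Ordinal.{0})
    (Z : Set (Cond2 κ lam η T F)) (X0 : Set (Ordinal × Ordinal))
    (h : Cond2 κ lam η T F → Cond2 κ lam η T F →
      (Ordinal × Ordinal) → (Ordinal × Ordinal))
    (hsep : Separated Z X0 h) (hZcard : #Z = Cardinal.lift.{2} (Order.succ κ))
    (p : Cond2 κ lam η T F) (hp : p ∈ Z)
    (s t : Ordinal × Ordinal) (hs : s ∈ p.X) (ht : t ∈ p.X)
    (hcompat : ∃ u ∈ p.X, p.le u s ∧ p.le u t)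
    (hncomp : ¬ p.le s t ∧ ¬ p.le t s)
    (hsX0 : s ∈ X0) (hslev : s.1 < η) :
    ∃ v ∈ X0, p.i s t = some v := by
  classical
  obtain ⟨hroot, hlevels, hmaps⟩ := hsep
  have hηcard : η.card ≤ Order.succ κ := Order.lt_succ_iff.mp (Cardinal.lt_ord.mp hη₂)
  have hst : s ≠ t := by
    rintro rfl
    exact hncomp.1 (p.le_refl s hs)
  obtain ⟨u, hu, hus, hut⟩ := hcompat
  obtain ⟨v, hvi, huv⟩ := (p.i_spec s hs t ht hst u hu).mp ⟨hus, hut⟩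
  have hvX : v ∈ p.X := p.i_mem s hs t ht hst v hvi
  -- `Z` has at least two elements
  have hZnt : Nontrivial (↥Z) := by
    rw [← Cardinal.one_lt_iff_nontrivial, hZcard]
    have h1 : (1 : Cardinal.{0}) < Order.succ κ :=
      lt_of_lt_of_le Cardinal.one_lt_aleph0 (le_trans hκ (Order.le_succ κ))
    simpa using Cardinal.lift_lt.{0,2}.mpr h1
  have hne : ∀ q ∈ Z, ∃ r, r ∈ Z ∧ r ≠ q := by
    intro q hq
    obtain ⟨r, hr⟩ := exists_ne (⟨q, hq⟩ : ↥Z)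
    exact ⟨r.1, r.2, fun e => hr (Subtype.ext e)⟩
  have hX0sub : ∀ q ∈ Z, X0 ⊆ q.X := by
    intro q hq
    obtain ⟨r, hr, hrq⟩ := hne q hq
    rw [← hroot q hq r hr (fun e => hrq e.symm)]
    exact Set.inter_subset_left
  -- the image of `v` in each `q ∈ Z` lies in `X_q` at a level in the orbit of `π(s)`
  have key : ∀ q, q ∈ Z → h p q v ∈ q.X ∧ (h p q v).1 ∈ T.orbit s.1 := by
    intro q hq
    obtain ⟨hadq, hfix, hle, hi⟩ := hmaps p hp q hq
    have hhs : h p q s = s := hfix s hsX0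
    have htq : h p q t ∈ q.X := hadq.1.mapsTo ht
    have hsq : s ∈ q.X := hX0sub q hq hsX0
    have hvq : h p q v ∈ q.X := hadq.1.mapsTo hvX
    have hiq : q.i s (h p q t) = some (h p q v) := by
      have h0 := hi s hs t ht hst
      rw [hvi, hhs] at h0
      exact h0.symm
    have hcompat' : ∃ u' ∈ q.X, q.le u' s ∧ q.le u' (h p q t) := by
      refine ⟨h p q u, hadq.1.mapsTo hu, ?_, (hle u hu t ht).mp hut⟩
      have h0 := (hle u hu s hs).mp hus
      rwa [hhs] at h0
    have hn1 : ¬ q.le s (h p q t) := by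
      intro hc
      exact hncomp.1 ((hle s hs t ht).mpr (by rwa [hhs]))
    have hn2 : ¬ q.le (h p q t) s := by
      intro hc
      exact hncomp.2 ((hle t ht s hs).mpr (by rwa [hhs]))
    rcases q.subT htq with h1 | h2
    · exact ⟨hvq, (q.P4a s hsq _ htq hcompat' hn1 hn2 _ hiq hslev h1.1).1⟩
    · exact ⟨hvq, (q.P4b s hsq _ htq hcompat' hn1 hn2 _ hiq hslev h2.1).1⟩
  have horb_lt : ∀ x, x ∈ T.orbit s.1 → x < s.1 := by
    intro x hx
    simp only [IntervalTree.orbit, Set.mem_iUnion₂, Set.mem_inter_iff,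
      Set.mem_Iio] at hx
    obtain ⟨m, _, _, hm⟩ := hx
    exact hm
  by_cases hA : ∃ q ∈ Z, ∀ r ∈ Z,
      r.X ∩ {x | x.1 = (h p q v).1} = X0 ∩ {x | x.1 = (h p q v).1}
  · -- case (i) at the level of some `h p q v`: the image is in the root
    obtain ⟨q, hq, hall⟩ := hA
    obtain ⟨hvq, horb⟩ := key q hq
    have hvq0 : h p q v ∈ X0 := by
      have h0 : h p q v ∈ q.X ∩ {x | x.1 = (h p q v).1} := ⟨hvq, rfl⟩
      rw [hall q hq] at h0
      exact h0.1
    have hinj := (hmaps p hp q hq).1.1.injOn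
    have hfix := (hmaps p hp q hq).2.1
    have hveq : v = h p q v := by
      apply hinj hvX (hX0sub p hp hvq0)
      rw [hfix _ hvq0]
    exact ⟨v, hveq ▸ hvq0, hvi⟩
  · -- otherwise case (ii) holds at every level `(h p q v).1`, contradiction with `|Z| = κ⁺`
    exfalso
    push_neg at hA
    have hii : ∀ q (hq : q ∈ Z), ∀ r ∈ Z, ∀ r' ∈ Z,
        (r.X ∩ {x | x.1 = (h p q v).1}).Nonempty →
        (r'.X ∩ {x | x.1 = (h p q v).1}).Nonempty → r = r' := by
      intro q hq
      have hlt : (h p q v).1 < η := lt_trans (horb_lt _ (key q hq).2) hslev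
      rcases hlevels _ hlt with h1 | h2
      · obtain ⟨r, hr, hne'⟩ := hA q hq
        exact absurd (h1 r hr) hne'
      · exact h2
    -- the map `q ↦ (h p q v).1` is injective from `Z` into the orbit of `π(s)`
    have hfinj : Function.Injective
        (fun z : ↥Z => (⟨⟨(h p z.1 v).1, (key z.1 z.2).2⟩⟩ :
          ULift.{2} (↥(T.orbit s.1)))) := by
      intro z w hzw
      have heq : (h p z.1 v).1 = (h p w.1 v).1 := by
        have := congrArg (fun y : ULift.{2} (↥(T.orbit s.1)) => (y.down : Ordinal)) hzw
        simpa using this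
      exact Subtype.ext (hii z.1 z.2 z.1 z.2 w.1 w.2
        ⟨h p z.1 v, (key z.1 z.2).1, rfl⟩
        ⟨h p w.1 v, (key w.1 w.2).1, heq.symm⟩)
    have hcard := Cardinal.mk_le_of_injective hfinj
    rw [Cardinal.mk_uLift, hZcard] at hcard
    have horb : #(↥(T.orbit s.1)) ≤ Cardinal.lift.{1} κ := orbit_card_le hκ hηcard T s.1
    have hfin : Cardinal.lift.{2} (Order.succ κ) ≤ Cardinal.lift.{2} κ := by
      refine le_trans hcard ?_
      rw [show Cardinal.lift.{2} κ = Cardinal.lift.{2} (Cardinal.lift.{1} κ) from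
        (Cardinal.lift_lift κ).symm]
      exact Cardinal.lift_le.mpr horb
    exact absurd (Cardinal.lift_le.mp hfin) (not_le.mpr (Order.lt_succ κ))
end
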